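/- There is no geometric criterion based solely on 'smallest area' determining which sub-triangle is free of critical points: there exists a quartic p with distinct roots 0, 1, a, b, with 0 interior to conv{1,a,b}, such that the sub-triangle of smallest area among (0,1,a), (0,a,b), (0,b,1) does contain a root of p'. -/

import Mathlib

open Polynomial

/-!
Take `a = -3 - 4i`, `b = (-1 + 11i)/7`. The sub-triangles `(0,1,a)`, `(0,a,b)`, `(0,b,1)` have areas
`2`, `37/14` and `11/14`, so `(0,b,1)` is the smallest, and yet it contains the critical point `i`
of `p = X(X-1)(X-a)(X-b)`. Membership in the interior of a triangle is checked through barycentric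
coordinates, which are ratios of signed areas.
-/

/-- Twice the (unsigned) area of the triangle with vertices `u, v, w` in `ℂ`,
halved: the usual cross-product formula. -/
noncomputable def triArea (u v w : ℂ) : ℝ :=
  |((v - u) * (starRingEnd ℂ) (w - u)).im| / 2

def doubleSignedArea (u v w : ℂ) : ℝ :=
  (v.re - u.re) * (w.im - u.im) - (v.im - u.im) * (w.re - u.re)

lemma triArea_eq_abs_doubleSignedArea (u v w : ℂ) :
    triArea u v w = |doubleSignedArea u v w| / 2 := by
  rw [triArea, doubleSignedArea, ← abs_neg]
  congr 2
  simp only [Complex.mul_im, Complex.sub_re, Complex.sub_im, Complex.conj_re, Complex.conj_im]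
  ring

lemma doubleSignedArea_smul_add (p q r x : ℂ) :
    doubleSignedArea x q r • p + doubleSignedArea p x r • q + doubleSignedArea p q x • r
      = doubleSignedArea p q r • x := by
  apply Complex.ext <;>
    simp only [Complex.add_re, Complex.add_im, Complex.smul_re, Complex.smul_im, smul_eq_mul,
      doubleSignedArea] <;> ring

lemma doubleSignedArea_add (p q r x : ℂ) :
    doubleSignedArea x q r + doubleSignedArea p x r + doubleSignedArea p q x
      = doubleSignedArea p q r := by
  simp only [doubleSignedArea]; ring

@[fun_prop]
lemma Continuous.doubleSignedArea {α : Type*} [TopologicalSpace α] {f g h : α → ℂ}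
    (hf : Continuous f) (hg : Continuous g) (hh : Continuous h) :
    Continuous fun x ↦ doubleSignedArea (f x) (g x) (h x) := by
  unfold _root_.doubleSignedArea; fun_prop

lemma add_add_smul_mem_convexHull {E : Type*} [AddCommGroup E] [Module ℝ E] (p q r : E)
    {c₁ c₂ c₃ : ℝ} (h₁ : 0 ≤ c₁) (h₂ : 0 ≤ c₂) (h₃ : 0 ≤ c₃) (hsum : c₁ + c₂ + c₃ = 1) :
    c₁ • p + c₂ • q + c₃ • r ∈ convexHull ℝ ({p, q, r} : Set E) := by
  have := (convex_convexHull ℝ ({p, q, r} : Set E)).sum_mem (t := Finset.univ)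
    (w := ![c₁, c₂, c₃]) (z := ![p, q, r])
    (by intro i _; fin_cases i <;> assumption)
    (by simpa [Fin.sum_univ_three] using hsum)
    (by intro i _; fin_cases i <;> apply subset_convexHull <;> simp)
  simpa [Fin.sum_univ_three] using this

lemma mem_interior_convexHull_triple {p q r x : ℂ}
    (h₁ : 0 < doubleSignedArea x q r / doubleSignedArea p q r)
    (h₂ : 0 < doubleSignedArea p x r / doubleSignedArea p q r)
    (h₃ : 0 < doubleSignedArea p q x / doubleSignedArea p q r) :
    x ∈ interior (convexHull ℝ ({p, q, r} : Set ℂ)) := by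
  set D := doubleSignedArea p q r
  have hD : D ≠ 0 := by rintro h; simp [h] at h₁
  let U := {y | 0 < doubleSignedArea y q r / D ∧ 0 < doubleSignedArea p y r / D ∧
    0 < doubleSignedArea p q y / D}
  have hU : IsOpen U := by
    simp only [U, Set.ofPred_and]
    exact (isOpen_lt continuous_const (by fun_prop)).inter <|
      (isOpen_lt continuous_const (by fun_prop)).inter (isOpen_lt continuous_const (by fun_prop))
  refine mem_interior.2 ⟨U, ?_, hU, h₁, h₂, h₃⟩
  rintro y ⟨hy₁, hy₂, hy₃⟩
  have hsum : doubleSignedArea y q r / D + doubleSignedArea p y r / D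
      + doubleSignedArea p q y / D = 1 := by
    rw [← add_div, ← add_div, doubleSignedArea_add, div_self hD]
  have hy : (doubleSignedArea y q r / D) • p + (doubleSignedArea p y r / D) • q
      + (doubleSignedArea p q y / D) • r = y := by
    rw [div_eq_inv_mul, div_eq_inv_mul, div_eq_inv_mul, mul_smul, mul_smul, mul_smul,
      ← smul_add, ← smul_add, doubleSignedArea_smul_add, smul_smul, inv_mul_cancel₀ hD, one_smul]
  simpa only [hy] using add_add_smul_mem_convexHull p q r hy₁.le hy₂.le hy₃.le hsum

/-- "Smallest area" is not a valid criterion: there is a quartic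
`p(z) = z(z-1)(z-a)(z-b)` with `0` interior to `conv{1,a,b}` such that the
sub-triangle of smallest area among `(0,1,a)`, `(0,a,b)`, `(0,b,1)` does
contain a root of `p'`. -/
theorem smallest_area_not_criterion :
    ∃ a b : ℂ, a ≠ 0 ∧ b ≠ 0 ∧ a ≠ 1 ∧ b ≠ 1 ∧ a ≠ b ∧
      (0 : ℂ) ∈ interior (convexHull ℝ ({1, a, b} : Set ℂ)) ∧
      ∃ u v : ℂ,
        ((u, v) = (1, a) ∨ (u, v) = (a, b) ∨ (u, v) = (b, 1)) ∧
        triArea 0 u v ≤ triArea 0 1 a ∧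
        triArea 0 u v ≤ triArea 0 a b ∧
        triArea 0 u v ≤ triArea 0 b 1 ∧
        ∃ w : ℂ,
          eval w (derivative (X * (X - C 1) * (X - C a) * (X - C b))) = 0 ∧
          w ∈ interior (convexHull ℝ ({0, u, v} : Set ℂ)) := by
  -- `b = i + q(i)/q'(i)` with `q = X(X-1)(X-a)`, which makes `p'(i) = q'(i)(i-b) + q(i)` vanish.
  refine ⟨⟨-3, -4⟩, ⟨-1/7, 11/7⟩, ?_, ?_, ?_, ?_, ?_, ?origin, ⟨-1/7, 11/7⟩, 1,
    Or.inr (Or.inr rfl), ?_, ?_, ?_, Complex.I, ?critical, ?inside⟩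
  case origin | inside =>
    exact mem_interior_convexHull_triple (by norm_num [doubleSignedArea])
      (by norm_num [doubleSignedArea]) (by norm_num [doubleSignedArea])
  case critical =>
    simp only [derivative_mul, derivative_X, derivative_sub, derivative_C, eval_mul, eval_add,
      eval_sub, eval_X, eval_C, eval_one]
    apply Complex.ext <;> norm_num
  all_goals norm_num [Complex.ext_iff, triArea_eq_abs_doubleSignedArea, doubleSignedArea,
    abs_of_neg, abs_of_pos]
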